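/- arXiv:1311.4025 — 4 statements merged into one kernel-verified Lean document; each statement's English description precedes it below -/
import Mathlib

section
/- Let f : Fin M → ℝ^N be a finite family of vectors and let Mod : ℝ^N → ℝ^M be the phaseless measurement map Mod(x) = (|⟨x, f_i⟩|)_{i=1}^M. Then for all x, x' ∈ ℝ^N, A_F · d(x,x') ≤ ‖Mod(x) − Mod(x')‖₂ ≤ B_F · d(x,x'), where A_F = min over all subsets Ω ⊆ Fin M of sqrt(λ₋(F_Ω)² + λ₋(F_{Ωᶜ})²) and B_F = λ₊(F). -/
/-!
Since `(|a| - |b|)² = min ((a - b)², (a + b)²)`, splitting the indices according to which of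
`⟨x, f i⟩ ∓ ⟨x', f i⟩` is smaller writes `‖Mod x - Mod x'‖²` as
`∑_{i∈Ω} ⟨x - x', f i⟩² + ∑_{i∉Ω} ⟨x + x', f i⟩²` for some `Ω`. The lower frame bounds of `F_Ω` and
`F_{Ωᶜ}` bound this below by `(λ₋(F_Ω)² + λ₋(F_{Ωᶜ})²) d(x, x')²`. Conversely, each summand is at
most both `⟨x - x', f i⟩²` and `⟨x + x', f i⟩²`, and the upper frame bound finishes the proof.
-/

open scoped BigOperators RealInnerProductSpace
open Finset

noncomputable section

/-- Lower frame bound of the subfamily of `g` indexed by `Ω`: the largest `c ≥ 0` such that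
`c·‖x‖ ≤ (∑_{i∈Ω} ⟨x, g i⟩²)^{1/2}` for all `x`. -/
def lowerFrameBound {N : ℕ} {ι : Type*} (g : ι → EuclideanSpace ℝ (Fin N))
    (Ω : Finset ι) : ℝ :=
  sSup {c : ℝ | 0 ≤ c ∧ ∀ x : EuclideanSpace ℝ (Fin N),
    c * ‖x‖ ≤ Real.sqrt (∑ i ∈ Ω, ⟪x, g i⟫ ^ 2)}

/-- Upper frame bound of the family `g`: the smallest `C ≥ 0` such that
`(∑_i ⟨x, g i⟩²)^{1/2} ≤ C·‖x‖` for all `x`. -/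
def upperFrameBound {N : ℕ} {ι : Type*} [Fintype ι] (g : ι → EuclideanSpace ℝ (Fin N)) : ℝ :=
  sInf {C : ℝ | 0 ≤ C ∧ ∀ x : EuclideanSpace ℝ (Fin N),
    Real.sqrt (∑ i, ⟪x, g i⟫ ^ 2) ≤ C * ‖x‖}

/-- Sign-invariant distance `d(x,x') = min(‖x−x'‖, ‖x+x'‖)`. -/
def sdist {N : ℕ} (x x' : EuclideanSpace ℝ (Fin N)) : ℝ :=
  min ‖x - x'‖ ‖x + x'‖

section FrameBounds

variable {N : ℕ} {ι : Type*} (g : ι → EuclideanSpace ℝ (Fin N))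

lemma lowerFrameBound_nonneg (Ω : Finset ι) : 0 ≤ lowerFrameBound g Ω :=
  Real.sSup_nonneg fun _ hc => hc.1

lemma lowerFrameBound_mul_norm_le (Ω : Finset ι) (y : EuclideanSpace ℝ (Fin N)) :
    lowerFrameBound g Ω * ‖y‖ ≤ √(∑ i ∈ Ω, ⟪y, g i⟫ ^ 2) := by
  rcases (norm_nonneg y).eq_or_lt with hy | hy
  · rw [← hy, mul_zero]
    exact Real.sqrt_nonneg _
  · rw [← le_div_iff₀ hy]
    exact csSup_le ⟨0, le_rfl, fun x => by simp⟩ fun c hc => (le_div_iff₀ hy).2 (hc.2 y)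

lemma lowerFrameBound_sq_mul_sq_norm_le (Ω : Finset ι) (y : EuclideanSpace ℝ (Fin N)) :
    lowerFrameBound g Ω ^ 2 * ‖y‖ ^ 2 ≤ ∑ i ∈ Ω, ⟪y, g i⟫ ^ 2 := by
  rw [← mul_pow, ← Real.le_sqrt (by have := lowerFrameBound_nonneg g Ω; positivity)
    (by positivity)]
  exact lowerFrameBound_mul_norm_le g Ω y

variable [Fintype ι]

lemma sqrt_sum_inner_sq_le_mul_norm (y : EuclideanSpace ℝ (Fin N)) :
    √(∑ i, ⟪y, g i⟫ ^ 2) ≤ √(∑ i, ‖g i‖ ^ 2) * ‖y‖ := by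
  rw [← Real.sqrt_sq (by positivity : 0 ≤ √(∑ i, ‖g i‖ ^ 2) * ‖y‖), mul_pow,
    Real.sq_sqrt (by positivity), sum_mul]
  refine Real.sqrt_le_sqrt (sum_le_sum fun i _ => ?_)
  rw [← sq_abs, mul_comm, ← mul_pow]
  exact pow_le_pow_left₀ (abs_nonneg _) (abs_real_inner_le_norm _ _) 2

lemma upperFrameBound_nonneg : 0 ≤ upperFrameBound g :=
  Real.sInf_nonneg fun _ hC => hC.1

lemma sqrt_sum_inner_sq_le_upperFrameBound_mul_norm (y : EuclideanSpace ℝ (Fin N)) :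
    √(∑ i, ⟪y, g i⟫ ^ 2) ≤ upperFrameBound g * ‖y‖ := by
  rcases (norm_nonneg y).eq_or_lt with hy | hy
  · simp [norm_eq_zero.1 hy.symm]
  · rw [← div_le_iff₀ hy]
    exact le_csInf ⟨_, Real.sqrt_nonneg _, sqrt_sum_inner_sq_le_mul_norm g⟩
      fun C hC => (div_le_iff₀ hy).2 (hC.2 y)

end FrameBounds

lemma sq_abs_sub_abs_eq_min (a b : ℝ) : (|a| - |b|) ^ 2 = min ((a - b) ^ 2) ((a + b) ^ 2) := by
  have h : (|a| - |b|) ^ 2 = a ^ 2 + b ^ 2 - 2 * |a * b| := by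
    rw [sub_sq, sq_abs, sq_abs, mul_assoc, ← abs_mul]
    ring
  rcases abs_cases (a * b) with ⟨hab, hpos⟩ | ⟨hab, hneg⟩
  · rw [min_eq_left (by nlinarith), h, hab]
    ring
  · rw [min_eq_right (by nlinarith), h, hab]
    ring

lemma exists_finset_sum_sq_abs_sub_abs_eq {ι : Type*} [Fintype ι] [DecidableEq ι]
    (a b : ι → ℝ) : ∃ Ω : Finset ι,
      ∑ i, (|a i| - |b i|) ^ 2 = ∑ i ∈ Ω, (a i - b i) ^ 2 + ∑ i ∈ Ωᶜ, (a i + b i) ^ 2 := by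
  refine ⟨univ.filter fun i => (a i - b i) ^ 2 ≤ (a i + b i) ^ 2, ?_⟩
  rw [compl_filter, ← sum_filter_add_sum_filter_not univ fun i => (a i - b i) ^ 2 ≤ (a i + b i) ^ 2]
  congr 1 <;> refine sum_congr rfl fun i hi => ?_ <;> rw [sq_abs_sub_abs_eq_min]
  · exact min_eq_left (mem_filter.1 hi).2
  · exact min_eq_right (le_of_not_ge (mem_filter.1 hi).2)

section Phaseless

variable {N : ℕ} {ι : Type*} [Fintype ι] (g : ι → EuclideanSpace ℝ (Fin N))
  (x x' : EuclideanSpace ℝ (Fin N))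

lemma sdist_nonneg : 0 ≤ sdist x x' :=
  le_min (norm_nonneg _) (norm_nonneg _)

lemma exists_sqrt_lowerFrameBound_mul_sdist_le [DecidableEq ι] : ∃ Ω : Finset ι,
    √(lowerFrameBound g Ω ^ 2 + lowerFrameBound g Ωᶜ ^ 2) * sdist x x'
      ≤ √(∑ i, (|⟪x, g i⟫| - |⟪x', g i⟫|) ^ 2) := by
  obtain ⟨Ω, hΩ⟩ := exists_finset_sum_sq_abs_sub_abs_eq (fun i => ⟪x, g i⟫) fun i => ⟪x', g i⟫
  refine ⟨Ω, ?_⟩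
  have hd := sdist_nonneg x x'
  have h₁ := lowerFrameBound_sq_mul_sq_norm_le g Ω (x - x')
  have h₂ := lowerFrameBound_sq_mul_sq_norm_le g Ωᶜ (x + x')
  simp only [inner_sub_left, inner_add_left] at h₁ h₂
  have hd₁ : sdist x x' ^ 2 ≤ ‖x - x'‖ ^ 2 := pow_le_pow_left₀ hd (min_le_left _ _) 2
  have hd₂ : sdist x x' ^ 2 ≤ ‖x + x'‖ ^ 2 := pow_le_pow_left₀ hd (min_le_right _ _) 2
  rw [← Real.sqrt_sq hd, ← Real.sqrt_mul (by positivity), hΩ]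
  refine Real.sqrt_le_sqrt ?_
  calc (lowerFrameBound g Ω ^ 2 + lowerFrameBound g Ωᶜ ^ 2) * sdist x x' ^ 2
      ≤ lowerFrameBound g Ω ^ 2 * ‖x - x'‖ ^ 2 + lowerFrameBound g Ωᶜ ^ 2 * ‖x + x'‖ ^ 2 := by
        rw [add_mul]
        gcongr
    _ ≤ _ := add_le_add h₁ h₂

lemma sqrt_sum_sq_abs_sub_abs_le_upperFrameBound_mul_sdist :
    √(∑ i, (|⟪x, g i⟫| - |⟪x', g i⟫|) ^ 2) ≤ upperFrameBound g * sdist x x' := by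
  have key : ∀ y, (∀ i, (|⟪x, g i⟫| - |⟪x', g i⟫|) ^ 2 ≤ ⟪y, g i⟫ ^ 2) →
      √(∑ i, (|⟪x, g i⟫| - |⟪x', g i⟫|) ^ 2) ≤ upperFrameBound g * ‖y‖ := fun y hy =>
    (Real.sqrt_le_sqrt (sum_le_sum fun i _ => hy i)).trans
      (sqrt_sum_inner_sq_le_upperFrameBound_mul_norm g y)
  rw [sdist, mul_min_of_nonneg _ _ (upperFrameBound_nonneg g)]
  refine le_min (key _ fun i => ?_) (key _ fun i => ?_) <;> rw [sq_abs_sub_abs_eq_min]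
  · rw [inner_sub_left]
    exact min_le_left _ _
  · rw [inner_add_left]
    exact min_le_right _ _

end Phaseless

/-- bi-Lipschitz bounds for the phaseless map `x ↦ (|⟨x, f_i⟩|)_i`. -/
theorem phaseless_biLipschitz {N M : ℕ} (f : Fin M → EuclideanSpace ℝ (Fin N)) :
    ∀ x x' : EuclideanSpace ℝ (Fin N),
      (⨅ Ω : Finset (Fin M),
          Real.sqrt (lowerFrameBound f Ω ^ 2 + lowerFrameBound f Ωᶜ ^ 2)) * sdist x x'
        ≤ Real.sqrt (∑ i, (|⟪x, f i⟫| - |⟪x', f i⟫|) ^ 2) ∧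
      Real.sqrt (∑ i, (|⟪x, f i⟫| - |⟪x', f i⟫|) ^ 2)
        ≤ upperFrameBound f * sdist x x' := by
  intro x x'
  obtain ⟨Ω, hΩ⟩ := exists_sqrt_lowerFrameBound_mul_sdist_le f x x'
  refine ⟨le_trans ?_ hΩ, sqrt_sum_sq_abs_sub_abs_le_upperFrameBound_mul_sdist f x x'⟩
  exact mul_le_mul_of_nonneg_right (ciInf_le (Set.finite_range _).bddBelow Ω) (sdist_nonneg x x')
end
end

section
/- Let f : Fin M → ℝ^N and let Mod(x) = (|⟨x, f_i⟩|)_{i=1}^M. The map Mod is injective modulo global sign change (i.e., Mod(x) = Mod(x') implies x = x' or x = −x') if and only if for every subset Ω ⊆ Fin M, either the family {f_i : i ∈ Ω} spans ℝ^N or the family {f_i : i ∈ Ωᶜ} spans ℝ^N (equivalently, either λ₋(F_Ω) > 0 or λ₋(F_{Ωᶜ}) > 0). -/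
/-!
Since `|⟪x, v⟫| = |⟪x', v⟫|` exactly when `v` is orthogonal to `x - x'` or to `x + x'`, and
`(x, x') ↦ (x - x', x + x')` is invertible, injectivity modulo sign says: there are no two nonzero
vectors `a`, `b` such that every `f i` is orthogonal to `a` or to `b`. Such a pair is the same as a
set `Ω` for which neither `{f i | i ∈ Ω}` nor `{f i | i ∈ Ωᶜ}` spans: take `Ω` to be the indices
with `f i ⟂ a`, and conversely take `a ⟂ f '' Ω`, `b ⟂ f '' Ωᶜ` nonzero.
-/

open scoped RealInnerProductSpace

section PhaseRetrieval

variable {ι E : Type*} [NormedAddCommGroup E] [InnerProductSpace ℝ E]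

def IsPhaseRetrievable (f : ι → E) : Prop :=
  ∀ x x' : E, (∀ i, |⟪x, f i⟫| = |⟪x', f i⟫|) → x = x' ∨ x = -x'

def HasComplementProperty (f : ι → E) : Prop :=
  ∀ S : Set ι, Submodule.span ℝ (f '' S) = ⊤ ∨ Submodule.span ℝ (f '' Sᶜ) = ⊤

lemma mem_orthogonal_span_iff {s : Set E} {a : E} :
    a ∈ (Submodule.span ℝ s)ᗮ ↔ ∀ u ∈ s, ⟪a, u⟫ = 0 := by
  rw [← Submodule.span_singleton_le_iff_mem, ← Submodule.isOrtho_iff_le, Submodule.isOrtho_span]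
  simp

lemma span_image_eq_top_iff [FiniteDimensional ℝ E] {f : ι → E} {S : Set ι} :
    Submodule.span ℝ (f '' S) = ⊤ ↔ ∀ a : E, (∀ i ∈ S, ⟪a, f i⟫ = 0) → a = 0 := by
  rw [← Submodule.orthogonal_eq_bot_iff, Submodule.eq_bot_iff]
  simp only [mem_orthogonal_span_iff, Set.forall_mem_image]

lemma abs_inner_eq_abs_inner_iff {x x' v : E} :
    |⟪x, v⟫| = |⟪x', v⟫| ↔ ⟪x - x', v⟫ = 0 ∨ ⟪x + x', v⟫ = 0 := by
  rw [abs_eq_abs, inner_sub_left, inner_add_left, sub_eq_zero, add_eq_zero_iff_eq_neg]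

lemma isPhaseRetrievable_iff {f : ι → E} :
    IsPhaseRetrievable f ↔
      ∀ a b : E, (∀ i, ⟪a, f i⟫ = 0 ∨ ⟪b, f i⟫ = 0) → a = 0 ∨ b = 0 := by
  have eq_or_eq_neg_iff (x x' : E) : (x = x' ∨ x = -x') ↔ (x - x' = 0 ∨ x + x' = 0) := by
    rw [sub_eq_zero, eq_neg_iff_add_eq_zero]
  simp only [IsPhaseRetrievable, abs_inner_eq_abs_inner_iff, eq_or_eq_neg_iff]
  constructor
  · intro h a b
    have hsub : (2 : ℝ)⁻¹ • (a + b) - (2 : ℝ)⁻¹ • (b - a) = a := by module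
    have hadd : (2 : ℝ)⁻¹ • (a + b) + (2 : ℝ)⁻¹ • (b - a) = b := by module
    simpa only [hsub, hadd] using h ((2 : ℝ)⁻¹ • (a + b)) ((2 : ℝ)⁻¹ • (b - a))
  · exact fun h x x' => h (x - x') (x + x')

lemma hasComplementProperty_iff [FiniteDimensional ℝ E] {f : ι → E} :
    HasComplementProperty f ↔
      ∀ a b : E, (∀ i, ⟪a, f i⟫ = 0 ∨ ⟪b, f i⟫ = 0) → a = 0 ∨ b = 0 := by
  constructor
  · intro h a b hab
    rcases h {i | ⟪a, f i⟫ = 0} with hS | hSc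
    · exact .inl (span_image_eq_top_iff.mp hS a fun _ hi => hi)
    · exact .inr (span_image_eq_top_iff.mp hSc b fun i hi => (hab i).resolve_left hi)
  · intro h S
    simp only [span_image_eq_top_iff]
    by_contra! ⟨⟨a, ha, ha0⟩, ⟨b, hb, hb0⟩⟩
    exact (h a b fun i => (em (i ∈ S)).imp (ha i) (hb i)).elim ha0 hb0

end PhaseRetrieval

/-- the phaseless map `x ↦ (|⟨x, f_i⟩|)_i` is injective modulo global sign
if and only if for every subset `Ω`, either `{f_i : i ∈ Ω}` or `{f_i : i ∈ Ωᶜ}`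
spans `ℝ^N`. -/
theorem phaseless_injective_iff {N M : ℕ} (f : Fin M → EuclideanSpace ℝ (Fin N)) :
    (∀ x x' : EuclideanSpace ℝ (Fin N),
        (∀ i, |⟪x, f i⟫| = |⟪x', f i⟫|) → x = x' ∨ x = -x') ↔
    (∀ Ω : Set (Fin M),
        Submodule.span ℝ (f '' Ω) = ⊤ ∨ Submodule.span ℝ (f '' Ωᶜ) = ⊤) :=
  isPhaseRetrievable_iff.trans hasComplementProperty_iff.symm
end

section
/- For any two vectors u, v ∈ ℝ^L (L ≥ 2) there exists an orthogonal L×L matrix U such that (Uu)_j = 0 and (Uv)_j = 0 for all j > 2, and (‖u‖₂ − ‖v‖₂)² = (|(Uu)_1| − |(Uv)_1|)² + (|(Uu)_2| − |(Uv)_2|)². (This is the 'bisecting rotation' used in the proof of the ℓ² pooling lower Lipschitz bound: after rotating u and v into a common two-dimensional coordinate plane and bisecting the angle between them, the difference of their norms equals the Euclidean distance between the entrywise absolute values of their first two coordinates.) -/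
/-!
Write `u = ‖u‖ • x` and `v = ‖v‖ • y` with unit vectors `x`, `y`. Since `‖x‖ = ‖y‖`, the bisectors
`x + y` and `x - y` are orthogonal, and by the parallelogram law `c = ‖x + y‖ / 2` and
`s = ‖x - y‖ / 2` satisfy `c² + s² = 1`. In an orthonormal pair `e₀`, `e₁` along the bisectors,
`u = ‖u‖ • (c • e₀ + s • e₁)` and `v = ‖v‖ • (c • e₀ - s • e₁)`. The rows of `U` are an orthonormal
basis starting with `e₀`, `e₁`, so the claimed identity reads
`(‖u‖ - ‖v‖)² = (‖u‖ - ‖v‖)² (c² + s²)`.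
-/

open scoped RealInnerProductSpace
open Matrix Module

noncomputable section

section

variable {E : Type*} [NormedAddCommGroup E] [InnerProductSpace ℝ E]

theorem exists_norm_eq_one_smul_eq [Nontrivial E] (x : E) : ∃ e : E, ‖e‖ = 1 ∧ x = ‖x‖ • e := by
  rcases eq_or_ne x 0 with rfl | hx
  · obtain ⟨e, he⟩ := exists_norm_eq E zero_le_one
    exact ⟨e, he, by simp⟩
  · exact ⟨‖x‖⁻¹ • x, norm_smul_inv_norm hx, by rw [smul_inv_smul₀ (norm_ne_zero_iff.mpr hx)]⟩

variable [FiniteDimensional ℝ E]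

theorem exists_norm_eq_one_smul_eq_of_inner_eq_zero (hE : 2 ≤ finrank ℝ E) {x y : E}
    (h : ⟪y, x⟫ = 0) : ∃ e : E, ‖e‖ = 1 ∧ ⟪y, e⟫ = 0 ∧ x = ‖x‖ • e := by
  have : Nontrivial (ℝ ∙ y)ᗮ := by
    apply Module.nontrivial_of_finrank_pos (R := ℝ)
    have := (ℝ ∙ y).finrank_add_finrank_orthogonal
    have : finrank ℝ (ℝ ∙ y) ≤ 1 := by simpa using finrank_span_le_card ({y} : Set E)
    omega
  obtain ⟨e, he, hxe⟩ := exists_norm_eq_one_smul_eq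
    (⟨x, Submodule.mem_orthogonal_singleton_iff_inner_right.mpr h⟩ : (ℝ ∙ y)ᗮ)
  exact ⟨e, he, Submodule.mem_orthogonal_singleton_iff_inner_right.mp e.2,
    congrArg Subtype.val hxe⟩

theorem exists_orthonormal_pair_smul_eq (hE : 2 ≤ finrank ℝ E) {p m : E} (h : ⟪m, p⟫ = 0) :
    ∃ e₀ e₁ : E, ‖e₀‖ = 1 ∧ ‖e₁‖ = 1 ∧ ⟪e₀, e₁⟫ = 0 ∧ p = ‖p‖ • e₀ ∧ m = ‖m‖ • e₁ := by
  obtain ⟨e₀, he₀, hme₀, hp⟩ := exists_norm_eq_one_smul_eq_of_inner_eq_zero hE h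
  obtain ⟨e₁, he₁, he₀e₁, hm⟩ := exists_norm_eq_one_smul_eq_of_inner_eq_zero hE
    (show ⟪e₀, m⟫ = 0 by rwa [real_inner_comm])
  exact ⟨e₀, e₁, he₀, he₁, he₀e₁, hp, hm⟩

theorem exists_bisecting_orthonormal_pair (hE : 2 ≤ finrank ℝ E) (u v : E) :
    ∃ e₀ e₁ : E, ‖e₀‖ = 1 ∧ ‖e₁‖ = 1 ∧ ⟪e₀, e₁⟫ = 0 ∧
      ∃ c s : ℝ, 0 ≤ c ∧ 0 ≤ s ∧ c ^ 2 + s ^ 2 = 1 ∧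
        u = ‖u‖ • (c • e₀ + s • e₁) ∧ v = ‖v‖ • (c • e₀ - s • e₁) := by
  have : Nontrivial E := Module.nontrivial_of_finrank_pos (R := ℝ) (by omega)
  obtain ⟨x, hx, hux⟩ := exists_norm_eq_one_smul_eq u
  obtain ⟨y, hy, hvy⟩ := exists_norm_eq_one_smul_eq v
  have hbisectors : ⟪x - y, x + y⟫ = 0 := by
    rw [real_inner_comm]
    exact (real_inner_add_sub_eq_zero_iff x y).mpr (hx.trans hy.symm)
  obtain ⟨e₀, e₁, he₀, he₁, he₀e₁, hp, hm⟩ := exists_orthonormal_pair_smul_eq hE hbisectors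
  refine ⟨e₀, e₁, he₀, he₁, he₀e₁, ‖x + y‖ / 2, ‖x - y‖ / 2, by positivity, by positivity,
    ?_, ?_, ?_⟩
  · have := parallelogram_law_with_norm ℝ x y
    rw [hx, hy] at this
    linear_combination this / 4
  · conv_lhs => rw [hux]
    congr 1
    linear_combination (norm := module) (2⁻¹ : ℝ) • hp + (2⁻¹ : ℝ) • hm
  · conv_lhs => rw [hvy]
    congr 1
    linear_combination (norm := module) (2⁻¹ : ℝ) • hp - (2⁻¹ : ℝ) • hm

theorem exists_orthonormalBasis_apply_eq_apply_eq {ι : Type*} [Fintype ι] [DecidableEq ι]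
    (hcard : finrank ℝ E = Fintype.card ι) {i j : ι} (hij : i ≠ j) {e₀ e₁ : E}
    (he₀ : ‖e₀‖ = 1) (he₁ : ‖e₁‖ = 1) (h : ⟪e₀, e₁⟫ = 0) :
    ∃ B : OrthonormalBasis ι ℝ E, B i = e₀ ∧ B j = e₁ := by
  let v : ι → E := fun k => if k = i then e₀ else e₁
  have hv : Orthonormal ℝ (({i, j} : Set ι).domRestrict v) := by
    rw [orthonormal_iff_ite]
    have h' : ⟪e₁, e₀⟫ = 0 := by rwa [real_inner_comm]
    rintro ⟨k, rfl | rfl⟩ ⟨l, rfl | rfl⟩ <;>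
      simp [v, Set.domRestrict_apply, Subtype.ext_iff, hij, hij.symm, he₀, he₁, h, h']
  obtain ⟨B, hB⟩ := hv.exists_orthonormalBasis_extension_of_card_eq hcard
  exact ⟨B, by simpa [v] using hB i (by simp), by simpa [v, hij.symm] using hB j (by simp)⟩

end

theorem OrthonormalBasis.exists_transpose_mul_self_eq_one_mulVec_eq_repr {ι : Type*}
    [Fintype ι] [DecidableEq ι] (B : OrthonormalBasis ι ℝ (EuclideanSpace ℝ ι)) :
    ∃ U : Matrix ι ι ℝ, Uᵀ * U = 1 ∧ ∀ x : EuclideanSpace ℝ ι, U *ᵥ x = B.repr x := by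
  refine ⟨B.toBasis.toMatrix (EuclideanSpace.basisFun ι ℝ), ?_, fun x => ?_⟩
  · rw [← conjTranspose_eq_transpose_of_trivial]
    exact B.toMatrix_orthonormalBasis_conjTranspose_mul_self _
  · exact Basis.toMatrix_mulVec_repr (b := (EuclideanSpace.basisFun ι ℝ).toBasis)
      (b' := B.toBasis) x

/-- for any `u, v ∈ ℝ^L` (`L ≥ 2`) there is an orthogonal matrix `U`
mapping both into the first two coordinates and bisecting them, so that
`(‖u‖ − ‖v‖)² = (|(Uu)₁| − |(Uv)₁|)² + (|(Uu)₂| − |(Uv)₂|)²`. -/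
theorem bisecting_rotation {L : ℕ} (hL : 2 ≤ L) (u v : EuclideanSpace ℝ (Fin L)) :
    ∃ U : Matrix (Fin L) (Fin L) ℝ, Uᵀ * U = 1 ∧
      (∀ j : Fin L, 2 ≤ (j : ℕ) → U.mulVec u j = 0 ∧ U.mulVec v j = 0) ∧
      (‖u‖ - ‖v‖) ^ 2 =
        (|U.mulVec u ⟨0, by omega⟩| - |U.mulVec v ⟨0, by omega⟩|) ^ 2 +
        (|U.mulVec u ⟨1, by omega⟩| - |U.mulVec v ⟨1, by omega⟩|) ^ 2 := by
  obtain ⟨e₀, e₁, he₀, he₁, he₀e₁, c, s, hc, hs, hcs, hu, hv⟩ :=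
    exists_bisecting_orthonormal_pair (by simpa using hL) u v
  obtain ⟨B, hB₀, hB₁⟩ := exists_orthonormalBasis_apply_eq_apply_eq (by simp)
    (i := (⟨0, by omega⟩ : Fin L)) (j := ⟨1, by omega⟩) (by simp) he₀ he₁ he₀e₁
  obtain ⟨U, hU, hUB⟩ := B.exists_transpose_mul_self_eq_one_mulVec_eq_repr
  have hUu : U *ᵥ u = ‖u‖ • (c • Pi.single ⟨0, by omega⟩ 1 + s • Pi.single ⟨1, by omega⟩ 1) := by
    rw [hUB]
    conv_lhs => rw [hu, ← hB₀, ← hB₁]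
    simp [B.repr_self]
  have hUv : U *ᵥ v = ‖v‖ • (c • Pi.single ⟨0, by omega⟩ 1 - s • Pi.single ⟨1, by omega⟩ 1) := by
    rw [hUB]
    conv_lhs => rw [hv, ← hB₀, ← hB₁]
    simp [B.repr_self]
  refine ⟨U, hU, fun j hj => ?_, ?_⟩
  · have h₀ : j ≠ ⟨0, by omega⟩ := Fin.ne_of_val_ne (by simp; omega)
    have h₁ : j ≠ ⟨1, by omega⟩ := Fin.ne_of_val_ne (by simp; omega)
    simp [hUu, hUv, h₀, h₁]
  · simp only [hUu, hUv, Pi.smul_apply, Pi.add_apply, Pi.sub_apply, smul_eq_mul, ne_eq,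
      Fin.mk.injEq, zero_ne_one, one_ne_zero, not_false_eq_true, Pi.single_eq_same,
      Pi.single_eq_of_ne, mul_one, mul_zero, add_zero, zero_add, sub_zero, zero_sub, mul_neg,
      abs_neg, abs_mul, abs_norm, abs_of_nonneg hc, abs_of_nonneg hs]
    linear_combination -(‖u‖ - ‖v‖) ^ 2 * hcs
end
end

section
/- Let f : Fin M → ℝ^N, let I ⊆ Fin M be a finite index set (a pool), and let x ∈ ℝ^N. Then the ℓ¹ pool value equals a max-pool over the sign-expanded family: ∑_{j∈I} |⟨x, f_j⟩| = max over sign patterns ε : I → {−1, 1} of |⟨x, ∑_{j∈I} ε_j · f_j⟩|. Consequently, the ℓ¹ pooling operator P₁ associated with a pooled frame coincides with the max-pooling operator P_∞ associated with the frame whose pool k consists of the 2^L vectors ∑_{j∈I_k} ε_j f_j, ε ∈ {−1,1}^{I_k}. -/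
/- Pairing `x` with `∑ ε_j f_j` gives `∑ ε_j ⟪x, f_j⟫`, which the triangle inequality bounds by
`∑ |⟪x, f_j⟫|` for any signs, with equality when every `ε_j` is the sign of `⟪x, f_j⟫`. -/

open scoped BigOperators RealInnerProductSpace
open Finset

section SignExpansion

variable {E ι : Type*} [NormedAddCommGroup E] [InnerProductSpace ℝ E]

def signExpandedPoolValues (f : ι → E) (s : Finset ι) (x : E) : Set ℝ :=
  {r | ∃ ε : ι → ℝ, (∀ j, ε j = 1 ∨ ε j = -1) ∧ r = |⟪x, ∑ j ∈ s, ε j • f j⟫|}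

lemma abs_inner_sum_smul_le_sum_abs_inner (f : ι → E) (s : Finset ι) (x : E) {ε : ι → ℝ}
    (hε : ∀ j, |ε j| ≤ 1) :
    |⟪x, ∑ j ∈ s, ε j • f j⟫| ≤ ∑ j ∈ s, |⟪x, f j⟫| := by
  rw [inner_sum]
  calc |∑ j ∈ s, ⟪x, ε j • f j⟫| ≤ ∑ j ∈ s, |⟪x, ε j • f j⟫| := abs_sum_le_sum_abs _ _
    _ ≤ ∑ j ∈ s, |⟪x, f j⟫| := by
      refine sum_le_sum fun j _ => ?_
      rw [real_inner_smul_right, abs_mul]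
      exact mul_le_of_le_one_left (abs_nonneg _) (hε j)

lemma ite_nonneg_one_neg_one_mul_eq_abs (a : ℝ) : (if 0 ≤ a then 1 else -1) * a = |a| := by
  split_ifs with ha
  · rw [one_mul, abs_of_nonneg ha]
  · rw [neg_one_mul, abs_of_neg (not_le.mp ha)]

lemma inner_sum_sign_smul_eq_sum_abs_inner (f : ι → E) (s : Finset ι) (x : E) :
    ⟪x, ∑ j ∈ s, (if 0 ≤ ⟪x, f j⟫ then 1 else -1 : ℝ) • f j⟫ = ∑ j ∈ s, |⟪x, f j⟫| := by
  simp only [inner_sum, real_inner_smul_right, ite_nonneg_one_neg_one_mul_eq_abs]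

theorem isGreatest_signExpandedPoolValues (f : ι → E) (s : Finset ι) (x : E) :
    IsGreatest (signExpandedPoolValues f s x) (∑ j ∈ s, |⟪x, f j⟫|) := by
  refine ⟨⟨fun j => if 0 ≤ ⟪x, f j⟫ then 1 else -1, fun j => ?_, ?_⟩, ?_⟩
  · dsimp only
    split_ifs <;> simp
  · rw [inner_sum_sign_smul_eq_sum_abs_inner, abs_of_nonneg (sum_nonneg fun j _ => abs_nonneg _)]
  · rintro r ⟨ε, hε, rfl⟩
    refine abs_inner_sum_smul_le_sum_abs_inner f s x fun j => ?_
    rcases hε j with h | h <;> simp [h]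

end SignExpansion

/-- the ℓ¹ pool value equals a max-pool over the sign-expanded family:
`∑_{j∈I} |⟨x, f_j⟩|` is the greatest value of `|⟨x, ∑_{j∈I} ε_j f_j⟩|` over sign
patterns `ε : I → {−1,1}`; consequently ℓ¹ pooling coincides with max-pooling over the
sign-expanded frame. -/
theorem l1_pool_eq_signExpanded_maxPool {N M : ℕ} (f : Fin M → EuclideanSpace ℝ (Fin N))
    (I : Finset (Fin M)) (x : EuclideanSpace ℝ (Fin N)) :
    IsGreatest {r : ℝ | ∃ ε : Fin M → ℝ, (∀ j, ε j = 1 ∨ ε j = -1) ∧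
        r = |⟪x, ∑ j ∈ I, ε j • f j⟫|}
      (∑ j ∈ I, |⟪x, f j⟫|) ∧
    ∀ (K : ℕ) (Is : Fin K → Finset (Fin M)) (k : Fin K),
      (∑ j ∈ Is k, |⟪x, f j⟫|) =
        sSup {r : ℝ | ∃ ε : Fin M → ℝ, (∀ j, ε j = 1 ∨ ε j = -1) ∧
          r = |⟪x, ∑ j ∈ Is k, ε j • f j⟫|} :=
  ⟨isGreatest_signExpandedPoolValues f I x,
    fun _ Is k => (isGreatest_signExpandedPoolValues f (Is k) x).csSup_eq.symm⟩
end
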